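/- Let n ≥ 1, ρ : ℝⁿ → (0,∞) be any function, 0 < α < 1, β > α and α < δ′ < β. Let K_t(x,z) (t > 0, x, z ∈ ℝⁿ) be a measurable family of kernels satisfying |K_t(x,z)| ≤ C₀ t^β (t + |x−z|)^{−(n+β)} for all t, x, z, and |∫_{ℝⁿ} K_t(x,z) dz| ≤ C₀ (t/ρ(x))^{δ′} for all t, x. Let f : ℝⁿ → ℝ satisfy |f(x)−f(z)| ≤ A|x−z|^α for all x, z and |f(x)| ≤ A ρ(x)^α for all x. Then there exists a constant C (depending only on n, α, β, δ′, C₀) such that |∫_{ℝⁿ} K_t(x,z) f(z) dz| ≤ C A t^α for all x ∈ ℝⁿ and t > 0. -/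

import Mathlib

/-!
Subtract the value at the centre:
`∫ K_t(x,z) f(z) dz = ∫ K_t(x,z) (f(z) - f(x)) dz + f(x) ∫ K_t(x,z) dz`.
By the size bound and Hölder continuity the first integral is at most
`C₀ A t^β ∫ |u|^α (t + |u|)^(-(n+β)) du`, and this integral scales exactly like `t^(α-β)`.
For the second term, if `t ≤ ρ(x)` the cancellation bound gives `(t/ρ(x))^δ' ρ(x)^α ≤ t^α`;
if `t > ρ(x)` the size bound alone gives `|∫ K_t(x,z) dz| ≲ 1`, and `|f(x)| ≤ A ρ(x)^α ≤ A t^α`.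
-/

open MeasureTheory Metric Set

open Module Filter Topology

section DecayWeight

variable {E : Type*} [NormedAddCommGroup E] [NormedSpace ℝ E]

noncomputable def decayWeight (γ β t : ℝ) (u : E) : ℝ :=
  ‖u‖ ^ γ * (t + ‖u‖) ^ (-((finrank ℝ E : ℝ) + β))

theorem decayWeight_nonneg {γ β t : ℝ} (ht : 0 ≤ t) (u : E) : 0 ≤ decayWeight γ β t u := by
  unfold decayWeight; positivity

theorem decayWeight_zero_left (β t : ℝ) (u : E) :
    decayWeight 0 β t u = (t + ‖u‖) ^ (-((finrank ℝ E : ℝ) + β)) := by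
  simp [decayWeight]

theorem decayWeight_eq_smul_inv {γ β t : ℝ} (ht : 0 < t) (u : E) :
    decayWeight γ β t u =
      t ^ (γ - ((finrank ℝ E : ℝ) + β)) * decayWeight γ β 1 (t⁻¹ • u) := by
  have hu : ‖t⁻¹ • u‖ = t⁻¹ * ‖u‖ := by rw [norm_smul, norm_inv, Real.norm_of_nonneg ht.le]
  have hsum : t + ‖u‖ = t * (1 + ‖t⁻¹ • u‖) := by rw [hu]; field_simp
  have hnorm : ‖u‖ = t * ‖t⁻¹ • u‖ := by rw [hu]; field_simp
  unfold decayWeight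
  rw [hsum, hnorm, Real.mul_rpow ht.le (norm_nonneg _), Real.mul_rpow ht.le (by positivity),
    Real.rpow_sub ht, Real.rpow_neg ht.le, div_eq_mul_inv]
  ring

variable [FiniteDimensional ℝ E] [MeasurableSpace E] [BorelSpace E]
  (μ : Measure E) [μ.IsAddHaarMeasure]

theorem integrable_decayWeight_one {γ β : ℝ} (hγ : 0 ≤ γ) (hγβ : γ < β) :
    Integrable (decayWeight γ β 1) μ := by
  have hdom : Integrable (fun u : E => (1 + ‖u‖) ^ (-((finrank ℝ E : ℝ) + β - γ))) μ :=
    integrable_one_add_norm (by linarith)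
  refine hdom.mono' (by unfold decayWeight; fun_prop) (ae_of_all _ fun u => ?_)
  have h1 : (0 : ℝ) < 1 + ‖u‖ := by positivity
  rw [Real.norm_of_nonneg (decayWeight_nonneg zero_le_one u), decayWeight,
    show -((finrank ℝ E : ℝ) + β - γ) = γ + -((finrank ℝ E : ℝ) + β) by ring, Real.rpow_add h1]
  gcongr
  linarith

theorem integrable_decayWeight {γ β t : ℝ} (hγ : 0 ≤ γ) (hγβ : γ < β) (ht : 0 < t) :
    Integrable (decayWeight γ β t) μ := by
  rw [funext (decayWeight_eq_smul_inv (γ := γ) (β := β) ht)]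
  exact ((integrable_decayWeight_one μ hγ hγβ).comp_smul (inv_ne_zero ht.ne')).const_mul _

theorem integral_decayWeight (γ β : ℝ) {t : ℝ} (ht : 0 < t) :
    ∫ u, decayWeight γ β t u ∂μ = t ^ (γ - β) * ∫ u, decayWeight γ β 1 u ∂μ := by
  simp_rw [decayWeight_eq_smul_inv ht]
  rw [integral_const_mul, Measure.integral_comp_inv_smul_of_nonneg μ _ ht.le, smul_eq_mul,
    ← Real.rpow_natCast, ← mul_assoc, ← Real.rpow_add ht]
  ring_nf

theorem integrable_of_abs_le_decayWeight {g : E → ℝ} {γ β t C : ℝ} (hγ : 0 ≤ γ) (hγβ : γ < β)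
    (ht : 0 < t) (x : E) (hgm : AEStronglyMeasurable g μ)
    (hg : ∀ z, |g z| ≤ C * decayWeight γ β t (z - x)) : Integrable g μ :=
  (((integrable_decayWeight μ hγ hγβ ht).comp_sub_right x).const_mul C).mono' hgm
    (ae_of_all _ hg)

theorem abs_integral_le_of_abs_le_decayWeight {g : E → ℝ} {γ β t C : ℝ} (hγ : 0 ≤ γ)
    (hγβ : γ < β) (ht : 0 < t) (x : E) (hg : ∀ z, |g z| ≤ C * t ^ β * decayWeight γ β t (z - x)) :
    |∫ z, g z ∂μ| ≤ C * (∫ u, decayWeight γ β 1 u ∂μ) * t ^ γ := by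
  have hbound : Integrable (fun z => C * t ^ β * decayWeight γ β t (z - x)) μ :=
    ((integrable_decayWeight μ hγ hγβ ht).comp_sub_right x).const_mul _
  calc |∫ z, g z ∂μ| ≤ ∫ z, C * t ^ β * decayWeight γ β t (z - x) ∂μ :=
        norm_integral_le_of_norm_le (f := g) hbound (ae_of_all _ hg)
    _ = C * t ^ β * (t ^ (γ - β) * ∫ u, decayWeight γ β 1 u ∂μ) := by
        rw [integral_const_mul, integral_sub_right_eq_self (decayWeight γ β t),
          integral_decayWeight μ γ β ht]
    _ = C * (∫ u, decayWeight γ β 1 u ∂μ) * t ^ γ := by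
        rw [← mul_assoc, mul_assoc C, ← Real.rpow_add ht, add_sub_cancel]; ring

end DecayWeight

theorem abs_mul_le_of_abs_le_min {t r α δ C₀ J A a b : ℝ} (ht : 0 < t) (hr : 0 < r) (hα : 0 ≤ α)
    (hαδ : α ≤ δ) (hC₀ : 0 ≤ C₀) (hA : 0 ≤ A) (haδ : |a| ≤ C₀ * (t / r) ^ δ)
    (haJ : |a| ≤ C₀ * J) (hb : |b| ≤ A * r ^ α) : |a * b| ≤ C₀ * max 1 J * A * t ^ α := by
  rw [abs_mul]
  rcases le_or_gt t r with htr | hrt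
  · have hscale : (t / r) ^ δ ≤ (t / r) ^ α :=
      Real.rpow_le_rpow_of_exponent_ge (by positivity) ((div_le_one hr).2 htr) hαδ
    calc |a| * |b| ≤ C₀ * (t / r) ^ α * (A * r ^ α) := by
          gcongr
          exact haδ.trans (mul_le_mul_of_nonneg_left hscale hC₀)
      _ = C₀ * A * t ^ α := by
          rw [Real.div_rpow ht.le hr.le]; field_simp
      _ ≤ C₀ * max 1 J * A * t ^ α := by
          gcongr
          exact le_mul_of_one_le_right hC₀ (le_max_left _ _)
  · calc |a| * |b| ≤ C₀ * J * (A * t ^ α) :=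
          mul_le_mul haJ (hb.trans (by gcongr)) (abs_nonneg b) ((abs_nonneg a).trans haJ)
      _ ≤ C₀ * max 1 J * A * t ^ α := by
          rw [← mul_assoc]; gcongr; exact le_max_right _ _

theorem continuous_of_abs_sub_le_mul_dist_rpow {X : Type*} [PseudoMetricSpace X] {f : X → ℝ}
    {A α : ℝ} (hα : 0 < α) (hf : ∀ x z, |f x - f z| ≤ A * dist x z ^ α) : Continuous f := by
  refine continuous_iff_continuousAt.2 fun x₀ => tendsto_iff_dist_tendsto_zero.2 ?_
  have hbound : Tendsto (fun y => A * dist y x₀ ^ α) (𝓝 x₀) (𝓝 0) :=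
    (((continuous_id.dist continuous_const).rpow_const fun _ => Or.inr hα.le).const_mul A).tendsto'
      x₀ 0 (by simp [Real.zero_rpow hα.ne'])
  exact squeeze_zero (fun _ => dist_nonneg) (fun y => (Real.dist_eq _ _).trans_le (hf y x₀)) hbound

theorem stmt_13 (n : ℕ)
    (ρ : EuclideanSpace ℝ (Fin n) → ℝ) (hρ : ∀ x, 0 < ρ x)
    (α β δ' : ℝ) (hα0 : 0 < α) (hβ : α < β) (hδ'1 : α < δ')
    (K : ℝ → EuclideanSpace ℝ (Fin n) → EuclideanSpace ℝ (Fin n) → ℝ)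
    (hKmeas : Measurable fun p : ℝ × EuclideanSpace ℝ (Fin n) × EuclideanSpace ℝ (Fin n) =>
      K p.1 p.2.1 p.2.2)
    (C₀ : ℝ) (hC₀ : 0 < C₀)
    (hKsize : ∀ (t : ℝ) (x z : EuclideanSpace ℝ (Fin n)), 0 < t →
      |K t x z| ≤ C₀ * t ^ β * (t + dist x z) ^ (-((n : ℝ) + β)))
    (hKint : ∀ (t : ℝ) (x : EuclideanSpace ℝ (Fin n)), 0 < t →
      |∫ z, K t x z| ≤ C₀ * (t / ρ x) ^ δ')
    (f : EuclideanSpace ℝ (Fin n) → ℝ) (A : ℝ) (hA : 0 < A)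
    (hfHolder : ∀ x z, |f x - f z| ≤ A * dist x z ^ α)
    (hfgrowth : ∀ x, |f x| ≤ A * ρ x ^ α) :
    ∃ C > (0 : ℝ), ∀ (x : EuclideanSpace ℝ (Fin n)) (t : ℝ), 0 < t →
      |∫ z, K t x z * f z| ≤ C * A * t ^ α := by
  set J₀ := ∫ u, decayWeight (E := EuclideanSpace ℝ (Fin n)) 0 β 1 u
  set Jα := ∫ u, decayWeight (E := EuclideanSpace ℝ (Fin n)) α β 1 u
  have hJα : 0 ≤ Jα := integral_nonneg (decayWeight_nonneg zero_le_one)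
  have hdim : (finrank ℝ (EuclideanSpace ℝ (Fin n)) : ℝ) = n := by simp
  have hfm : Measurable f := (continuous_of_abs_sub_le_mul_dist_rpow hα0 hfHolder).measurable
  refine ⟨C₀ * (Jα + max 1 J₀), by positivity, fun x t ht => ?_⟩
  have hKm : Measurable (K t x) :=
    hKmeas.comp (measurable_const.prodMk (measurable_const.prodMk measurable_id))
  have hK : ∀ z, |K t x z| ≤ C₀ * t ^ β * decayWeight 0 β t (z - x) := fun z => by
    rw [decayWeight_zero_left, hdim, ← dist_eq_norm, dist_comm]
    exact hKsize t x z ht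
  have hKf : ∀ z, |K t x z * (f z - f x)| ≤ C₀ * A * t ^ β * decayWeight α β t (z - x) :=
    fun z => calc
      |K t x z * (f z - f x)|
          ≤ C₀ * t ^ β * (t + dist x z) ^ (-((n : ℝ) + β)) * (A * dist z x ^ α) := by
        rw [abs_mul]; gcongr; exacts [hKsize t x z ht, hfHolder z x]
      _ = C₀ * A * t ^ β * decayWeight α β t (z - x) := by
        rw [decayWeight, hdim, dist_comm x z, dist_eq_norm]; ring
  have hKi : Integrable (K t x) :=
    integrable_of_abs_le_decayWeight _ le_rfl (hα0.trans hβ) ht x hKm.aestronglyMeasurable hK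
  have hKfi : Integrable fun z => K t x z * (f z - f x) :=
    integrable_of_abs_le_decayWeight _ hα0.le hβ ht x (by fun_prop) hKf
  have hsplit :
      ∫ z, K t x z * f z = (∫ z, K t x z * (f z - f x)) + (∫ z, K t x z) * f x := by
    rw [← integral_mul_const, ← integral_add hKfi (hKi.mul_const _)]
    simp only [mul_sub, sub_add_cancel]
  have hosc := abs_integral_le_of_abs_le_decayWeight volume hα0.le hβ ht x hKf
  have hmean : |(∫ z, K t x z) * f x| ≤ C₀ * max 1 J₀ * A * t ^ α :=
    abs_mul_le_of_abs_le_min ht (hρ x) hα0.le hδ'1.le hC₀.le hA.le (hKint t x ht)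
      (by simpa using abs_integral_le_of_abs_le_decayWeight volume le_rfl (hα0.trans hβ) ht x hK)
      (hfgrowth x)
  calc |∫ z, K t x z * f z| ≤ |∫ z, K t x z * (f z - f x)| + |(∫ z, K t x z) * f x| :=
        by rw [hsplit]; exact abs_add_le _ _
    _ ≤ C₀ * A * Jα * t ^ α + C₀ * max 1 J₀ * A * t ^ α := add_le_add hosc hmean
    _ = C₀ * (Jα + max 1 J₀) * A * t ^ α := by ring
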